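/- arXiv:1612.04859 — 2 statements merged into one kernel-verified Lean document; each statement's English description precedes it below -/
import Mathlib

section
/- For every smooth function u : ℝ × ℝ → ℝ of (t,x) (not assumed to solve any equation), the following divergence identity holds at every point: ∂_t( u² ) − (1/4)·∂_x( u⁴ + (u²·u_x − 2·u_t)² ) = ( u²·u_x − 2·u_t )·( u_{tx} − u − (1/2)·u²·u_{xx} − u·u_x² ). In particular, u²·u_x − 2·u_t is a local conservation-law multiplier for the short pulse equation. -/
/-- Partial derivative with respect to the first (time) variable. -/
noncomputable def pt (f : ℝ × ℝ → ℝ) : ℝ × ℝ → ℝ :=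
  fun q => deriv (fun s => f (s, q.2)) q.1

/-- Partial derivative with respect to the second (space) variable. -/
noncomputable def px (f : ℝ × ℝ → ℝ) : ℝ × ℝ → ℝ :=
  fun q => deriv (fun s => f (q.1, s)) q.2

lemma hasDerivAt_t (f : ℝ × ℝ → ℝ) (hf : Differentiable ℝ f) (p : ℝ × ℝ) :
    HasDerivAt (fun s => f (s, p.2)) (pt f p) p.1 := by
  have h : DifferentiableAt ℝ (fun s => f (s, p.2)) p.1 :=
    (hf (p.1, p.2)).comp p.1 (differentiableAt_id.prodMk (differentiableAt_const _))
  exact h.hasDerivAt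

lemma hasDerivAt_x (f : ℝ × ℝ → ℝ) (hf : Differentiable ℝ f) (p : ℝ × ℝ) :
    HasDerivAt (fun s => f (p.1, s)) (px f p) p.2 := by
  have h : DifferentiableAt ℝ (fun s => f (p.1, s)) p.2 :=
    (hf (p.1, p.2)).comp p.2 ((differentiableAt_const _).prodMk differentiableAt_id)
  exact h.hasDerivAt

lemma pt_fderiv (f : ℝ × ℝ → ℝ) (hf : Differentiable ℝ f) (p : ℝ × ℝ) :
    pt f p = fderiv ℝ f p ((1 : ℝ), (0 : ℝ)) := by
  have h1 : HasDerivAt (fun s : ℝ => (s, p.2)) ((1 : ℝ), (0 : ℝ)) p.1 :=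
    (hasDerivAt_id p.1).prodMk (hasDerivAt_const p.1 p.2)
  have h : HasDerivAt (fun s => f (s, p.2)) (fderiv ℝ f p (1, 0)) p.1 := by
    exact (hf (p.1, p.2)).hasFDerivAt.comp_hasDerivAt p.1 h1
  exact (hasDerivAt_t f hf p).unique h

lemma px_fderiv (f : ℝ × ℝ → ℝ) (hf : Differentiable ℝ f) (p : ℝ × ℝ) :
    px f p = fderiv ℝ f p ((0 : ℝ), (1 : ℝ)) := by
  have h1 : HasDerivAt (fun s : ℝ => (p.1, s)) ((0 : ℝ), (1 : ℝ)) p.2 :=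
    (hasDerivAt_const p.2 p.1).prodMk (hasDerivAt_id p.2)
  have h : HasDerivAt (fun s => f (p.1, s)) (fderiv ℝ f p (0, 1)) p.2 := by
    exact (hf (p.1, p.2)).hasFDerivAt.comp_hasDerivAt p.2 h1
  exact (hasDerivAt_x f hf p).unique h

lemma contDiff_dapply (f : ℝ × ℝ → ℝ) (hf : ContDiff ℝ (⊤ : ℕ∞) f) (v : ℝ × ℝ) :
    ContDiff ℝ (⊤ : ℕ∞) (fun q => fderiv ℝ f q v) :=
  (ContinuousLinearMap.apply ℝ ℝ v).contDiff.comp (hf.fderiv_right (by simp))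

lemma contDiff_pt (f : ℝ × ℝ → ℝ) (hf : ContDiff ℝ (⊤ : ℕ∞) f) : ContDiff ℝ (⊤ : ℕ∞) (pt f) := by
  have e : pt f = fun q => fderiv ℝ f q (1, 0) :=
    funext fun q => pt_fderiv f (hf.differentiable (by simp)) q
  rw [e]; exact contDiff_dapply f hf _

lemma contDiff_px (f : ℝ × ℝ → ℝ) (hf : ContDiff ℝ (⊤ : ℕ∞) f) : ContDiff ℝ (⊤ : ℕ∞) (px f) := by
  have e : px f = fun q => fderiv ℝ f q (0, 1) :=
    funext fun q => px_fderiv f (hf.differentiable (by simp)) q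
  rw [e]; exact contDiff_dapply f hf _

lemma mixed_symm (u : ℝ × ℝ → ℝ) (hu : ContDiff ℝ (⊤ : ℕ∞) u) (p : ℝ × ℝ) :
    px (pt u) p = pt (px u) p := by
  have hu' : Differentiable ℝ u := hu.differentiable (by simp)
  have hD : ContDiff ℝ (⊤ : ℕ∞) (fderiv ℝ u) := hu.fderiv_right (by simp)
  set f'' := fderiv ℝ (fderiv ℝ u) p with hf''def
  have hf'' : HasFDerivAt (fderiv ℝ u) f'' p := (hD.differentiable (by simp) p).hasFDerivAt
  have comp_eval : ∀ v w : ℝ × ℝ, fderiv ℝ (fun q => fderiv ℝ u q v) p w = f'' w v := by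
    intro v w
    have hc : HasFDerivAt (fun q => fderiv ℝ u q v)
        ((ContinuousLinearMap.apply ℝ ℝ v).comp f'') p :=
      ((ContinuousLinearMap.apply ℝ ℝ v).hasFDerivAt).comp p hf''
    rw [hc.fderiv]; rfl
  have et : pt u = fun q => fderiv ℝ u q (1, 0) := funext fun q => pt_fderiv u hu' q
  have ex : px u = fun q => fderiv ℝ u q (0, 1) := funext fun q => px_fderiv u hu' q
  rw [et, ex,
    px_fderiv _ ((contDiff_dapply u hu _).differentiable (by simp)) p,
    pt_fderiv _ ((contDiff_dapply u hu _).differentiable (by simp)) p,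
    comp_eval, comp_eval]
  exact second_derivative_symmetric (fun x => (hu' x).hasFDerivAt) hf'' _ _

/-- For every smooth `u`, the divergence identity showing that `u² u_x - 2 u_t` is a
multiplier for the short pulse equation holds everywhere. -/
theorem sp_multiplier_identity_square (u : ℝ × ℝ → ℝ) (hu : ContDiff ℝ (⊤ : ℕ∞) u) :
    ∀ p : ℝ × ℝ,
      pt (fun q => u q ^ 2) p
        - (1 / 4) * px (fun q => u q ^ 4 + (u q ^ 2 * px u q - 2 * pt u q) ^ 2) p
      = (u p ^ 2 * px u p - 2 * pt u p)
          * (pt (px u) p - u p - (1 / 2) * u p ^ 2 * px (px u) p - u p * (px u p) ^ 2) := by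
  intro p
  have hu' : Differentiable ℝ u := hu.differentiable (by simp)
  have hux' : Differentiable ℝ (px u) := (contDiff_px u hu).differentiable (by simp)
  have hut' : Differentiable ℝ (pt u) := (contDiff_pt u hu).differentiable (by simp)
  -- time derivative of u^2
  have h1 : pt (fun q => u q ^ 2) p = 2 * u p ^ 1 * pt u p := by
    have := (hasDerivAt_t u hu' p).pow 2
    simpa [pt, Pi.pow_def] using this.deriv
  -- space derivative of the flux
  have hU := hasDerivAt_x u hu' p
  have hUx := hasDerivAt_x (px u) hux' p
  have hUt := hasDerivAt_x (pt u) hut' p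
  have hA : HasDerivAt (fun s => u (p.1, s) ^ 2 * px u (p.1, s) - 2 * pt u (p.1, s))
      ((2 * u p ^ 1 * px u p) * px u p + u p ^ 2 * px (px u) p - 2 * px (pt u) p) p.2 :=
    ((hU.pow 2).mul hUx).sub (hUt.const_mul 2)
  have hBig := (hU.pow 4).add (hA.pow 2)
  have h2 : px (fun q => u q ^ 4 + (u q ^ 2 * px u q - 2 * pt u q) ^ 2) p
      = 4 * u p ^ 3 * px u p
        + 2 * (u p ^ 2 * px u p - 2 * pt u p) ^ 1
          * ((2 * u p ^ 1 * px u p) * px u p + u p ^ 2 * px (px u) p - 2 * px (pt u) p) := by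
    simpa [px, Pi.pow_def, Pi.add_def] using hBig.deriv
  rw [h1, h2, mixed_symm u hu p]
  ring
end

section
/- Second additional conservation law for one-dimensional polytropic gas dynamics with γ = (n+2)/n = 3 (n = 1): let ρ, u, p : ℝ × ℝ → ℝ be smooth functions of (t,x) satisfying, at every point, the Euler equations ρ_t + (ρu)_x = 0, ρ(u_t + u·u_x) + p_x = 0, p_t + u·p_x + 3·p·u_x = 0. Then ∂_t( t²·(ρ·u² + p) − 2·t·ρ·x·u + ρ·x² ) + ∂_x( t²·(ρ·u³ + 3·p·u) − 2·t·x·(ρ·u² + p) + ρ·x²·u ) = 0 at every point of ℝ². -/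
lemma hasDerivAt_pt (f : ℝ × ℝ → ℝ) (hf : ContDiff ℝ (⊤ : ℕ∞) f) (t x : ℝ) :
    HasDerivAt (fun s => f (s, x)) (pt f (t, x)) t := by
  have hd : DifferentiableAt ℝ (fun s => f (s, x)) t :=
    DifferentiableAt.comp t (hf.differentiable (by simp) (t, x))
      (differentiableAt_id.prodMk (differentiableAt_const x))
  simpa [pt] using hd.hasDerivAt

lemma hasDerivAt_px (f : ℝ × ℝ → ℝ) (hf : ContDiff ℝ (⊤ : ℕ∞) f) (t x : ℝ) :
    HasDerivAt (fun s => f (t, s)) (px f (t, x)) x := by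
  have hd : DifferentiableAt ℝ (fun s => f (t, s)) x :=
    DifferentiableAt.comp x (hf.differentiable (by simp) (t, x))
      ((differentiableAt_const t).prodMk differentiableAt_id)
  simpa [px] using hd.hasDerivAt

/-- Second additional conservation law for 1D polytropic gas dynamics with `γ = 3`. -/
theorem euler1d_additional_second (ρ u P : ℝ × ℝ → ℝ)
    (hρ : ContDiff ℝ (⊤ : ℕ∞) ρ) (hu : ContDiff ℝ (⊤ : ℕ∞) u) (hP : ContDiff ℝ (⊤ : ℕ∞) P)
    (h₁ : ∀ z : ℝ × ℝ, pt ρ z + px (fun q => ρ q * u q) z = 0)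
    (h₂ : ∀ z : ℝ × ℝ, ρ z * (pt u z + u z * px u z) + px P z = 0)
    (h₃ : ∀ z : ℝ × ℝ, pt P z + u z * px P z + 3 * P z * px u z = 0) :
    ∀ z : ℝ × ℝ,
      pt (fun q => q.1 ^ 2 * (ρ q * u q ^ 2 + P q) - 2 * q.1 * ρ q * q.2 * u q
            + ρ q * q.2 ^ 2) z
        + px (fun q => q.1 ^ 2 * (ρ q * u q ^ 3 + 3 * P q * u q)
            - 2 * q.1 * q.2 * (ρ q * u q ^ 2 + P q) + ρ q * q.2 ^ 2 * u q) z = 0 := by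
  rintro ⟨t, x⟩
  have hρt := hasDerivAt_pt ρ hρ t x
  have hut := hasDerivAt_pt u hu t x
  have hPt := hasDerivAt_pt P hP t x
  have hρx := hasDerivAt_px ρ hρ t x
  have hux := hasDerivAt_px u hu t x
  have hPx := hasDerivAt_px P hP t x
  set R := ρ (t, x)
  set U := u (t, x)
  set Pv := P (t, x)
  set Rt := pt ρ (t, x)
  set Ut := pt u (t, x)
  set Ptv := pt P (t, x)
  set Rx := px ρ (t, x)
  set Ux := px u (t, x)
  set Pxv := px P (t, x)
  -- rewrite h₁ using product rule
  have hmul : px (fun q => ρ q * u q) (t, x) = Rx * U + R * Ux := by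
    have h := (hρx.mul hux).deriv
    exact h
  have E1 : Rt + (Rx * U + R * Ux) = 0 := by
    have := h₁ (t, x); rwa [hmul] at this
  have E2 := h₂ (t, x)
  have E3 := h₃ (t, x)
  -- time derivative of the density of the conserved quantity
  have A1 : HasDerivAt
      (fun s => s ^ 2 * (ρ (s, x) * u (s, x) ^ 2 + P (s, x)) - 2 * s * ρ (s, x) * x * u (s, x)
          + ρ (s, x) * x ^ 2)
      (2 * t * (R * U ^ 2 + Pv) + t ^ 2 * (Rt * U ^ 2 + 2 * R * U * Ut + Ptv)
        - 2 * x * (R * U + t * Rt * U + t * R * Ut) + Rt * x ^ 2) t := by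
    have h1 := (hasDerivAt_pow 2 t).mul ((hρt.mul (hut.pow 2)).add hPt)
    have h2 := ((((hasDerivAt_id t).const_mul 2).mul hρt).mul_const x).mul hut
    have h3 := hρt.mul_const (x ^ 2)
    have h := (h1.sub h2).add h3
    refine (h.congr_of_eventuallyEq (Filter.Eventually.of_forall fun s => ?_)).congr_deriv ?_
    · simp only [Pi.mul_apply, Pi.add_apply, Pi.sub_apply, Pi.pow_apply, id_eq]
    · simp only [Pi.mul_apply, Pi.add_apply, Pi.sub_apply, Pi.pow_apply, id_eq]; push_cast; ring
  -- space derivative of the flux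
  have A2 : HasDerivAt
      (fun s => t ^ 2 * (ρ (t, s) * u (t, s) ^ 3 + 3 * P (t, s) * u (t, s))
          - 2 * t * s * (ρ (t, s) * u (t, s) ^ 2 + P (t, s)) + ρ (t, s) * s ^ 2 * u (t, s))
      (t ^ 2 * (Rx * U ^ 3 + 3 * R * U ^ 2 * Ux + 3 * Pxv * U + 3 * Pv * Ux)
        - 2 * t * (R * U ^ 2 + Pv) - 2 * t * x * (Rx * U ^ 2 + 2 * R * U * Ux + Pxv)
        + (Rx * x ^ 2 * U + 2 * x * R * U + R * x ^ 2 * Ux)) x := by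
    have h1 := ((hρx.mul ((hux.pow 3))).add ((hPx.const_mul 3).mul hux)).const_mul (t ^ 2)
    have h2 := (((hasDerivAt_id x).const_mul (2 * t)).mul ((hρx.mul (hux.pow 2)).add hPx))
    have h3 := (hρx.mul (hasDerivAt_pow 2 x)).mul hux
    have h := (h1.sub h2).add h3
    refine (h.congr_of_eventuallyEq (Filter.Eventually.of_forall fun s => ?_)).congr_deriv ?_
    · simp only [Pi.mul_apply, Pi.add_apply, Pi.sub_apply, Pi.pow_apply, id_eq]
    · simp only [Pi.mul_apply, Pi.add_apply, Pi.sub_apply, Pi.pow_apply, id_eq]; push_cast; ring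
  have hA1 : pt (fun q : ℝ × ℝ => q.1 ^ 2 * (ρ q * u q ^ 2 + P q) - 2 * q.1 * ρ q * q.2 * u q
      + ρ q * q.2 ^ 2) (t, x) =
      2 * t * (R * U ^ 2 + Pv) + t ^ 2 * (Rt * U ^ 2 + 2 * R * U * Ut + Ptv)
        - 2 * x * (R * U + t * Rt * U + t * R * Ut) + Rt * x ^ 2 := by
    simpa [pt] using A1.deriv
  have hA2 : px (fun q : ℝ × ℝ => q.1 ^ 2 * (ρ q * u q ^ 3 + 3 * P q * u q)
      - 2 * q.1 * q.2 * (ρ q * u q ^ 2 + P q) + ρ q * q.2 ^ 2 * u q) (t, x) =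
      t ^ 2 * (Rx * U ^ 3 + 3 * R * U ^ 2 * Ux + 3 * Pxv * U + 3 * Pv * Ux)
        - 2 * t * (R * U ^ 2 + Pv) - 2 * t * x * (Rx * U ^ 2 + 2 * R * U * Ux + Pxv)
        + (Rx * x ^ 2 * U + 2 * x * R * U + R * x ^ 2 * Ux) := by
    simpa [px] using A2.deriv
  rw [hA1, hA2]
  linear_combination (t ^ 2 * U ^ 2 - 2 * t * x * U + x ^ 2) * E1
    + (2 * t ^ 2 * U - 2 * t * x) * E2 + t ^ 2 * E3
end
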